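/- In a weak temporal doctrine with the comprehension axiom (c_X ⊣ k_X : PX → C/X with k_X fully faithful), the colimit formula for the tensor holds: ten_X(N, M) ≅ colim_{dom(k_X i'_X N)} ((k_X i'_X N)• M), where the colimit is taken over the domain of the comprehension object of i'_X N. -/

import Mathlib

noncomputable section

open CategoryTheory CategoryTheory.Limits MonoidalCategory

universe v₂ u₂ v u

/-- The internal-hom bifunctor `(L, M) ↦ (i L ⟹ i M)` defined on a full subcategory
`i : M ⥤ P` of exponentiable objects. -/
@[simps]
def expBifun {M : Type u} [Category.{v} M] {P : Type u₂} [Category.{v₂} P]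
    [CartesianMonoidalCategory P] (i : M ⥤ P) (e : ∀ L : M, Closed (i.obj L)) :
    Mᵒᵖ × M ⥤ P where
  obj LM :=
    letI := e LM.1.unop
    (ihom (i.obj LM.1.unop)).obj (i.obj LM.2)
  map {A B} fg :=
    letI := e A.1.unop
    letI := e B.1.unop
    (MonoidalClosed.pre (i.map fg.1.unop)).app (i.obj A.2) ≫ (ihom (i.obj B.1.unop)).map (i.map fg.2)
  map_id A := by
    letI := e A.1.unop
    simp
  map_comp {A B D} fg fg' := by
    letI := e A.1.unop
    letI := e B.1.unop
    letI := e D.1.unop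
    simp only [prod_comp, unop_comp, Functor.map_comp, MonoidalClosed.pre_map, NatTrans.comp_app,
      Category.assoc]
    rw [(MonoidalClosed.pre (i.map fg'.1.unop)).naturality_assoc]

/-- A weak temporal doctrine: an indexed inclusion
`⟨i_X : M X → P X ← M' X : i'_X ; X ∈ C⟩` of reflective and coreflective subcategories
of "left closed" and "right closed" parts, where the `P X` are cartesian with left and
right closed parts exponentiable, substitution `f*` has a left adjoint `Σ_f` satisfying
the Frobenius law, substitution on closed parts has both adjoints `∃_f ⊣ f• ⊣ ∀_f`
(with `∃_f ≅ ⋄_Y Σ_f i_X`), the mixed Frobenius laws hold, the two projections from the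
truth-values category `B 1` are equivalences, and the comprehension adjunction
`c_X ⊣ k_X` has fully faithful right adjoint. -/
structure WeakTemporalDoctrine (C : Type u) [Category.{v} C] [HasTerminal C] where
  P : C → Type u₂
  M : C → Type u₂
  M' : C → Type u₂
  [catP : ∀ X, Category.{v₂} (P X)]
  [catM : ∀ X, Category.{v₂} (M X)]
  [catM' : ∀ X, Category.{v₂} (M' X)]
  [cfpP : ∀ X, CartesianMonoidalCategory (P X)]
  [termM : ∀ X, HasTerminal (M X)]
  [termM' : ∀ X, HasTerminal (M' X)]
  i : ∀ X, M X ⥤ P X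
  i' : ∀ X, M' X ⥤ P X
  [iFull : ∀ X, (i X).Full]
  [iFaithful : ∀ X, (i X).Faithful]
  [i'Full : ∀ X, (i' X).Full]
  [i'Faithful : ∀ X, (i' X).Faithful]
  expo : ∀ (X) (L : M X), Closed ((i X).obj L)
  expo' : ∀ (X) (N : M' X), Closed ((i' X).obj N)
  dm : ∀ X, P X ⥤ M X
  sq : ∀ X, P X ⥤ M X
  dm' : ∀ X, P X ⥤ M' X
  sq' : ∀ X, P X ⥤ M' X
  dmAdj : ∀ X, dm X ⊣ i X
  sqAdj : ∀ X, i X ⊣ sq X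
  dm'Adj : ∀ X, dm' X ⊣ i' X
  sq'Adj : ∀ X, i' X ⊣ sq' X
  sub : ∀ {X Y : C}, (X ⟶ Y) → (P Y ⥤ P X)
  subId : ∀ X : C, sub (𝟙 X) ≅ 𝟭 (P X)
  subComp : ∀ {X Y Z : C} (f : X ⟶ Y) (g : Y ⟶ Z), sub (f ≫ g) ≅ sub g ⋙ sub f
  msub : ∀ {X Y : C}, (X ⟶ Y) → (M Y ⥤ M X)
  m'sub : ∀ {X Y : C}, (X ⟶ Y) → (M' Y ⥤ M' X)
  mcompat : ∀ {X Y : C} (f : X ⟶ Y), msub f ⋙ i X ≅ i Y ⋙ sub f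
  m'compat : ∀ {X Y : C} (f : X ⟶ Y), m'sub f ⋙ i' X ≅ i' Y ⋙ sub f
  sigma : ∀ {X Y : C}, (X ⟶ Y) → (P X ⥤ P Y)
  sigmaAdj : ∀ {X Y : C} (f : X ⟶ Y), sigma f ⊣ sub f
  frobenius : ∀ {X Y : C} (f : X ⟶ Y),
    Nonempty (((𝟭 (P X)).prod (sub f) ⋙ MonoidalCategory.tensor (P X) ⋙ sigma f) ≅
      ((sigma f).prod (𝟭 (P Y)) ⋙ MonoidalCategory.tensor (P Y)))
  fa : ∀ {X Y : C}, (X ⟶ Y) → (M X ⥤ M Y)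
  faAdj : ∀ {X Y : C} (f : X ⟶ Y), msub f ⊣ fa f
  fa' : ∀ {X Y : C}, (X ⟶ Y) → (M' X ⥤ M' Y)
  fa'Adj : ∀ {X Y : C} (f : X ⟶ Y), m'sub f ⊣ fa' f
  ex : ∀ {X Y : C}, (X ⟶ Y) → (M X ⥤ M Y)
  exAdj : ∀ {X Y : C} (f : X ⟶ Y), ex f ⊣ msub f
  exIso : ∀ {X Y : C} (f : X ⟶ Y), ex f ≅ i X ⋙ sigma f ⋙ dm Y
  ex' : ∀ {X Y : C}, (X ⟶ Y) → (M' X ⥤ M' Y)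
  ex'Adj : ∀ {X Y : C} (f : X ⟶ Y), ex' f ⊣ m'sub f
  ex'Iso : ∀ {X Y : C} (f : X ⟶ Y), ex' f ≅ i' X ⋙ sigma f ⋙ dm' Y
  mixedFrob : ∀ X : C,
    Nonempty (((𝟭 (P X)).prod (i' X) ⋙ MonoidalCategory.tensor (P X) ⋙ dm X) ≅
      ((dm X ⋙ i X).prod (i' X) ⋙ MonoidalCategory.tensor (P X) ⋙ dm X))
  mixedFrob' : ∀ X : C,
    Nonempty (((𝟭 (P X)).prod (i X) ⋙ MonoidalCategory.tensor (P X) ⋙ dm' X) ≅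
      ((dm' X ⋙ i' X).prod (i X) ⋙ MonoidalCategory.tensor (P X) ⋙ dm' X))
  Bone : Type u₂
  [catB : Category.{v₂} Bone]
  j : Bone ⥤ M (⊤_ C)
  j' : Bone ⥤ M' (⊤_ C)
  jcomm : j ⋙ i (⊤_ C) ≅ j' ⋙ i' (⊤_ C)
  [jEquiv : j.IsEquivalence]
  [j'Equiv : j'.IsEquivalence]
  c : ∀ X : C, Over X ⥤ P X
  k : ∀ X : C, P X ⥤ Over X
  compAdj : ∀ X : C, c X ⊣ k X
  cIso : ∀ (X : C) (u : Over X), (c X).obj u ≅ (sigma u.hom).obj (𝟙_ (P u.left))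
  kCounitIso : ∀ X : C, IsIso (compAdj X).counit

namespace WeakTemporalDoctrine

attribute [instance] catP catM catM' cfpP termM termM' iFull iFaithful i'Full i'Faithful
  catB jEquiv j'Equiv

variable {C : Type u} [Category.{v} C] [HasTerminal C]
variable (H : WeakTemporalDoctrine.{v₂, u₂} C)

/-- The internal limit functor `lim_X := j₁⁻¹ ∘ ∀_X : M X ⥤ B 1`. -/
def limF (X : C) : H.M X ⥤ H.Bone := H.fa (terminal.from X) ⋙ H.j.inv

/-- The internal colimit functor `colim_X := j₁⁻¹ ∘ ∃_X : M X ⥤ B 1`. -/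
def colimF (X : C) : H.M X ⥤ H.Bone := H.ex (terminal.from X) ⋙ H.j.inv

/-- The internal colimit functor for right closed parts,
`colim'_X := j'₁⁻¹ ∘ ∃'_X : M' X ⥤ B 1`. -/
def colim'F (X : C) : H.M' X ⥤ H.Bone := H.ex' (terminal.from X) ⋙ H.j'.inv

/-- The end functor `end_X := j₁⁻¹ ∘ ∀_X ∘ □_X : P X ⥤ B 1`. -/
def endF (X : C) : H.P X ⥤ H.Bone := H.sq X ⋙ H.limF X

/-- The coend functor `coend_X := j₁⁻¹ ∘ ∃_X ∘ ⋄_X : P X ⥤ B 1`. -/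
def coendF (X : C) : H.P X ⥤ H.Bone := H.dm X ⋙ H.colimF X

/-- The `B 1`-valued hom `nat_X (L, M) := end_X (i L ⟹ i M)` of `M X`. -/
def natF (X : C) : (H.M X)ᵒᵖ × H.M X ⥤ H.Bone :=
  expBifun (H.i X) (H.expo X) ⋙ H.endF X

/-- The `B 1`-valued tensor `ten_X (N, M) := coend_X (i' N × i M)`. -/
def tenF (X : C) : H.M' X × H.M X ⥤ H.Bone :=
  (H.i' X).prod (H.i X) ⋙ MonoidalCategory.tensor (H.P X) ⋙ H.coendF X

/-- The functor `M ↦ nat_X (L, M)` for a fixed left closed part `L`. -/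
def natWith {X : C} (L : H.M X) : H.M X ⥤ H.Bone :=
  letI := H.expo X L
  H.i X ⋙ ihom ((H.i X).obj L) ⋙ H.endF X

/-- The functor `M ↦ ten_X (N, M)` for a fixed right closed part `N`. -/
def tenWith {X : C} (N : H.M' X) : H.M X ⥤ H.Bone :=
  H.i X ⋙ tensorLeft ((H.i' X).obj N) ⋙ H.coendF X

end WeakTemporalDoctrine

namespace WeakTemporalDoctrine

variable {C : Type u} [Category.{v} C] [HasTerminal C]
variable (H : WeakTemporalDoctrine.{v₂, u₂} C)

/-- Substitution on left closed parts is (pseudo)functorial. -/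
def msubComp {X Y Z : C} (f : X ⟶ Y) (g : Y ⟶ Z) :
    H.msub (f ≫ g) ≅ H.msub g ⋙ H.msub f :=
  Functor.fullyFaithfulCancelRight (H.i X)
    (H.mcompat (f ≫ g) ≪≫ Functor.isoWhiskerLeft (H.i Z) (H.subComp f g) ≪≫
      (Functor.associator _ _ _).symm ≪≫
      Functor.isoWhiskerRight (H.mcompat g).symm (H.sub f) ≪≫
      Functor.associator _ _ _ ≪≫
      Functor.isoWhiskerLeft (H.msub g) (H.mcompat f).symm ≪≫
      (Functor.associator _ _ _).symm)

/-- Existential quantification on left closed parts is (pseudo)functorial. -/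
def exComp {X Y Z : C} (f : X ⟶ Y) (g : Y ⟶ Z) :
    H.ex f ⋙ H.ex g ≅ H.ex (f ≫ g) :=
  ((H.exAdj f).comp (H.exAdj g)).leftAdjointUniq
    ((H.exAdj (f ≫ g)).ofNatIsoRight (H.msubComp f g))

end WeakTemporalDoctrine

open WeakTemporalDoctrine in
/-- In a weak temporal doctrine with the comprehension axiom
(`c_X ⊣ k_X : P X ⥤ C/X` with `k_X` fully faithful), the colimit formula for the
tensor holds: for every right closed part `N`,
`ten_X (N, M) ≅ colim_{dom (k_X (i' N))} ((k_X (i' N))• M)` naturally in `M`,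
where the colimit is taken over the domain of the comprehension object of `i' N`. -/
theorem statement19 {C : Type u} [Category.{v} C] [HasTerminal C]
    (H : WeakTemporalDoctrine.{v₂, u₂} C) {X : C} (N : H.M' X) :
    Nonempty (H.tenWith N ≅
      (H.msub ((H.k X).obj ((H.i' X).obj N)).hom ⋙
        H.colimF ((H.k X).obj ((H.i' X).obj N)).left)) := by
  classical
  set u : Over X := (H.k X).obj ((H.i' X).obj N) with hu
  obtain ⟨Φ⟩ := H.frobenius u.hom
  haveI := H.kCounitIso X
  let f : u.left ⟶ X := u.hom
  let e : (H.sigma f).obj (𝟙_ (H.P u.left)) ≅ (H.i' X).obj N :=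
    (H.cIso X u).symm ≪≫ asIso ((H.compAdj X).counit.app ((H.i' X).obj N))
  let T : H.P X ⥤ H.Bone := H.coendF X
  let G0 : H.M X ⥤ H.P u.left × H.P X :=
    ((Functor.const (H.M X)).obj (𝟙_ (H.P u.left))).prod' (H.i X)
  let r1 : H.i X ⋙ tensorLeft ((H.sigma f).obj (𝟙_ (H.P u.left))) ≅
      G0 ⋙ ((H.sigma f).prod (𝟭 (H.P X)) ⋙ MonoidalCategory.tensor (H.P X)) :=
    NatIso.ofComponents (fun M => Iso.refl _) (by
      intro M M' g
      simp [G0, MonoidalCategory.tensorHom_def])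
  let r2 : G0 ⋙ ((𝟭 (H.P u.left)).prod (H.sub f) ⋙ MonoidalCategory.tensor (H.P u.left)) ≅
      (H.i X ⋙ H.sub f) ⋙ tensorLeft (𝟙_ (H.P u.left)) :=
    NatIso.ofComponents (fun M => Iso.refl _) (by
      intro M M' g
      simp [G0, MonoidalCategory.tensorHom_def])
  let r3 : (H.i X ⋙ H.sub f) ⋙ tensorLeft (𝟙_ (H.P u.left)) ≅ H.i X ⋙ H.sub f :=
    NatIso.ofComponents (fun M => λ_ _) (by intro M M' g; simp)
  refine ⟨?_⟩
  calc H.tenWith N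
      ≅ H.i X ⋙ tensorLeft ((H.sigma f).obj (𝟙_ (H.P u.left))) ⋙ T :=
        Functor.isoWhiskerLeft (H.i X) (Functor.isoWhiskerRight ((curriedTensor (H.P X)).mapIso e.symm) T)
    _ ≅ (G0 ⋙ ((H.sigma f).prod (𝟭 (H.P X)) ⋙ MonoidalCategory.tensor (H.P X))) ⋙ T :=
        Functor.isoWhiskerRight r1 T
    _ ≅ (G0 ⋙ ((𝟭 (H.P u.left)).prod (H.sub f) ⋙
          MonoidalCategory.tensor (H.P u.left) ⋙ H.sigma f)) ⋙ T :=
        Functor.isoWhiskerRight (Functor.isoWhiskerLeft G0 Φ.symm) T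
    _ ≅ (((H.i X ⋙ H.sub f) ⋙ tensorLeft (𝟙_ (H.P u.left))) ⋙ H.sigma f) ⋙ T :=
        Functor.isoWhiskerRight (Functor.isoWhiskerRight r2 (H.sigma f)) T
    _ ≅ ((H.i X ⋙ H.sub f) ⋙ H.sigma f) ⋙ T :=
        Functor.isoWhiskerRight (Functor.isoWhiskerRight r3 (H.sigma f)) T
    _ ≅ ((H.msub f ⋙ H.i u.left) ⋙ H.sigma f) ⋙ T :=
        Functor.isoWhiskerRight (Functor.isoWhiskerRight (H.mcompat f).symm (H.sigma f)) T
    _ ≅ H.msub f ⋙ (H.ex f ⋙ H.ex (terminal.from X)) ⋙ H.j.inv :=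
        Functor.isoWhiskerLeft (H.msub f)
          (Functor.isoWhiskerRight (H.exIso f).symm (H.ex (terminal.from X) ⋙ H.j.inv))
    _ ≅ H.msub f ⋙ H.colimF u.left :=
        Functor.isoWhiskerLeft (H.msub f)
          (Functor.isoWhiskerRight (H.exComp f (terminal.from X) ≪≫
            eqToIso (congrArg H.ex (terminal.comp_from f))) H.j.inv)
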